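/- arXiv:0905.3242 — 2 statements merged into one kernel-verified Lean document; each statement's English description precedes it below -/
import Mathlib

section
/- Let a ∈ C^{m+1}[0,1] and b ∈ C^m[0,1] be real-valued with m ≥ 1, and define U_m(x,λ) = exp(λx + Σ_{i=0}^{m} λ^{−i} ∫₀^x φ_i^{(+)}(t) dt), where the φ_i^{(+)} are given by the recurrence φ_0^{(+)} = a, φ_1^{(+)} = −(a' + a² + b)/2, φ_i^{(+)} = −(1/2)((φ_{i−1}^{(+)})' + Σ_{j=0}^{i−1} φ_j^{(+)} φ_{i−j−1}^{(+)}) for i ≥ 2. Then U_m ∈ C²[0,1], U_m(0,λ) = 1, U_m'(0,λ) = λ + Σ_{i=0}^m φ_i^{(+)}(0) λ^{−i}, and U_m'' − λ² U_m − 2λ a U_m + b U_m = λ^{−m} e^{λx} f_m(x,λ) on [0,1], where |f_m(x,λ)| ≤ C_m uniformly for all x ∈ [0,1] and all sufficiently large |λ|. -/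
/-- The coefficients `φᵢ^{(+)}`, defined by `φ₀ = a`, `φ₁ = −(a' + a² + b)/2`,
`φᵢ = −(1/2)(φ_{i−1}' + Σ_{j=0}^{i−1} φⱼ φ_{i−j−1})` for `i ≥ 2`, derivatives
being taken within `[0,1]`. -/
noncomputable def phiCoeffP (a b : ℝ → ℝ) : ℕ → ℝ → ℂ
  | 0 => fun x => (a x : ℂ)
  | 1 => fun x => ((-(derivWithin a (Set.Icc 0 1) x + (a x) ^ 2 + b x) / 2 : ℝ) : ℂ)
  | (i + 2) => fun x =>
      -(1 / 2 : ℂ) * (derivWithin (phiCoeffP a b (i + 1)) (Set.Icc 0 1) x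
        + ∑ j ∈ (Finset.range (i + 2)).attach,
            phiCoeffP a b j.1 x * phiCoeffP a b (i + 1 - j.1) x)
  termination_by n => n
  decreasing_by
    · omega
    · have := j.2; simp only [Finset.mem_range] at this; omega
    · omega

/-- `U_m(x,λ) = exp(λx + Σ_{i=0}^{m} λ^{−i} ∫₀ˣ φᵢ^{(+)}(t) dt)`. -/
noncomputable def Ufun (a b : ℝ → ℝ) (m : ℕ) (l : ℂ) (x : ℝ) : ℂ :=
  Complex.exp (l * x + ∑ i ∈ Finset.range (m + 1),
    l ^ (-(i : ℤ)) * ∫ t in (0:ℝ)..x, phiCoeffP a b i t)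

/-!
Write `U = exp S` with `S' = λ + P`, `P = Σᵢ λ⁻ⁱ φᵢ`. Then `U'' = (P' + (λ + P)²) U`, so
`U'' − λ²U − 2λaU + bU = (P' + 2λ(P − φ₀) + P² + b) U`. Expanded in powers of `λ⁻¹`, the
coefficient of `λ⁻ᵏ` for `k < m` is `φₖ' + 2φₖ₊₁ + Σ_{i+j=k} φᵢφⱼ (+ b if k = 0)`, which the
recurrence makes vanish; what is left is `λ⁻ᵐ (φₘ' + Σ_{i+j≥m} λ^{m−i−j} φᵢφⱼ)`. For `|λ| ≥ 1`
this and `U e^{−λx} = exp (Σᵢ λ⁻ⁱ ∫₀ˣ φᵢ)` are bounded by the sup norms of the continuous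
functions `φ₀, …, φₘ, φₘ'` on `[0,1]`.
-/

open Finset

section Primitive

variable {E : Type*} [NormedAddCommGroup E] [NormedSpace ℝ E] {f : ℝ → E} {a b x : ℝ}

theorem hasDerivWithinAt_primitive_Icc [CompleteSpace E] (hf : ContinuousOn f (Set.Icc a b))
    (hx : x ∈ Set.Icc a b) :
    HasDerivWithinAt (fun u => ∫ t in a..u, f t) (f x) (Set.Icc a b) x := by
  have : Fact (x ∈ Set.Icc a b) := ⟨hx⟩
  refine intervalIntegral.integral_hasDerivWithinAt_right ?_
    ⟨Set.Icc a b, self_mem_nhdsWithin, hf.aestronglyMeasurable measurableSet_Icc⟩ (hf x hx)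
  refine (hf.mono ?_).intervalIntegrable
  rw [Set.uIcc_of_le hx.1]
  exact Set.Icc_subset_Icc_right hx.2

theorem ContDiffOn.primitive_Icc [CompleteSpace E] (hab : a < b) {n : ℕ}
    (hf : ContDiffOn ℝ n f (Set.Icc a b)) :
    ContDiffOn ℝ (n + 1) (fun u => ∫ t in a..u, f t) (Set.Icc a b) := by
  have hderiv : ∀ x ∈ Set.Icc a b,
      HasDerivWithinAt (fun u => ∫ t in a..u, f t) (f x) (Set.Icc a b) x :=
    fun x hx => hasDerivWithinAt_primitive_Icc hf.continuousOn hx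
  rw [contDiffOn_succ_iff_derivWithin (uniqueDiffOn_Icc hab)]
  refine ⟨fun x hx => (hderiv x hx).differentiableWithinAt, fun h => by simp at h, ?_⟩
  exact hf.congr fun x hx => (hderiv x hx).derivWithin (uniqueDiffOn_Icc hab x hx)

theorem norm_primitive_le {M : ℝ} (hM : ∀ t ∈ Set.Icc a b, ‖f t‖ ≤ M) (hx : x ∈ Set.Icc a b) :
    ‖∫ t in a..x, f t‖ ≤ M * (b - a) := by
  have hM₀ : 0 ≤ M := (norm_nonneg _).trans (hM x hx)
  calc ‖∫ t in a..x, f t‖ ≤ M * |x - a| :=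
        intervalIntegral.norm_integral_le_of_norm_le_const fun t ht => by
          rw [Set.uIoc_of_le hx.1] at ht
          exact hM t ⟨ht.1.le, ht.2.trans hx.2⟩
    _ ≤ M * (b - a) := by
        rw [abs_of_nonneg (sub_nonneg.2 hx.1)]
        exact mul_le_mul_of_nonneg_left (by linarith [hx.2]) hM₀

end Primitive

theorem derivWithin_derivWithin_cexp {S S' : ℝ → ℂ} {S'' : ℂ} {s : Set ℝ} {x : ℝ}
    (hs : UniqueDiffOn ℝ s) (hS : ∀ y ∈ s, HasDerivWithinAt S (S' y) s y)
    (hS' : HasDerivWithinAt S' S'' s x) (hx : x ∈ s) :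
    derivWithin (derivWithin (fun y => Complex.exp (S y)) s) s x
      = (S'' + S' x ^ 2) * Complex.exp (S x) := by
  have hfirst : ∀ y ∈ s, derivWithin (fun y => Complex.exp (S y)) s y
      = Complex.exp (S y) * S' y := fun y hy => (hS y hy).cexp.derivWithin (hs y hy)
  rw [derivWithin_congr hfirst (hfirst x hx),
    ((hS x hx).cexp.fun_mul hS').derivWithin (hs x hx)]
  ring

theorem IsCompact.exists_bound_of_continuousOn_finset {X ι F : Type*} [TopologicalSpace X]
    [SeminormedAddCommGroup F] {K : Set X} (hK : IsCompact K) (s : Finset ι) {f : ι → X → F}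
    (hf : ∀ i ∈ s, ContinuousOn (f i) K) : ∃ C, ∀ i ∈ s, ∀ x ∈ K, ‖f i x‖ ≤ C := by
  obtain ⟨C, hC⟩ := hK.exists_bound_of_continuousOn
    (continuousOn_finsetSum s fun i hi => (hf i hi).norm)
  refine ⟨C, fun i hi x hx => ?_⟩
  calc ‖f i x‖ ≤ ∑ j ∈ s, ‖f j x‖ := single_le_sum (fun j _ => norm_nonneg (f j x)) hi
    _ ≤ ‖∑ j ∈ s, ‖f j x‖‖ := Real.le_norm_self _
    _ ≤ C := hC x hx

def highPairs (m : ℕ) : Finset (ℕ × ℕ) := {p ∈ range (m + 1) ×ˢ range (m + 1) | m ≤ p.1 + p.2}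

theorem sq_sum_range_pow_mul {R : Type*} [CommSemiring R] (m : ℕ) (μ : R) (c : ℕ → R) :
    (∑ i ∈ range (m + 1), μ ^ i * c i) ^ 2
      = ∑ k ∈ range m, μ ^ k * ∑ p ∈ antidiagonal k, c p.1 * c p.2
        + ∑ p ∈ highPairs m, μ ^ (p.1 + p.2) * (c p.1 * c p.2) := by
  have hlow : ∑ p ∈ range (m + 1) ×ˢ range (m + 1) with ¬m ≤ p.1 + p.2,
      μ ^ (p.1 + p.2) * (c p.1 * c p.2)
        = ∑ k ∈ range m, μ ^ k * ∑ p ∈ antidiagonal k, c p.1 * c p.2 := by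
    rw [← sum_fiberwise_of_maps_to (g := fun p : ℕ × ℕ => p.1 + p.2) (t := range m)
      (by simp +contextual [not_le])]
    refine sum_congr rfl fun k hk => ?_
    rw [mul_sum]
    refine sum_congr ?_ fun p hp => by rw [HasAntidiagonal.mem_antidiagonal.1 hp]
    ext p
    simp only [mem_filter, mem_product, mem_range, HasAntidiagonal.mem_antidiagonal] at hk ⊢
    omega
  calc (∑ i ∈ range (m + 1), μ ^ i * c i) ^ 2
      = ∑ p ∈ range (m + 1) ×ˢ range (m + 1), μ ^ (p.1 + p.2) * (c p.1 * c p.2) := by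
        rw [sq, sum_mul_sum, ← sum_product']
        exact sum_congr rfl fun p _ => by ring
    _ = _ := by
        rw [← sum_filter_add_sum_filter_not _ (fun p => m ≤ p.1 + p.2), hlow, add_comm, highPairs]

theorem riccati_truncation {R : Type*} [CommRing R] {m : ℕ} (hm : 1 ≤ m) {l μ : R} (hlμ : l * μ = 1)
    (c d : ℕ → R) (B : R) (h₀ : d 0 + 2 * c 1 + c 0 * c 0 + B = 0)
    (hrec : ∀ k, 1 ≤ k → k < m → d k + 2 * c (k + 1) + ∑ p ∈ antidiagonal k, c p.1 * c p.2 = 0) :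
    ∑ i ∈ range (m + 1), μ ^ i * d i + 2 * l * (∑ i ∈ range (m + 1), μ ^ i * c i - c 0)
        + (∑ i ∈ range (m + 1), μ ^ i * c i) ^ 2 + B
      = μ ^ m * (d m + ∑ p ∈ highPairs m, μ ^ (p.1 + p.2 - m) * (c p.1 * c p.2)) := by
  have hshift : 2 * l * (∑ i ∈ range (m + 1), μ ^ i * c i - c 0)
      = ∑ k ∈ range m, μ ^ k * (2 * c (k + 1)) := by
    rw [sum_range_succ', pow_zero, one_mul, add_sub_cancel_right, mul_sum]
    refine sum_congr rfl fun k _ => ?_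
    linear_combination 2 * μ ^ k * c (k + 1) * hlμ
  have hhigh : μ ^ m * ∑ p ∈ highPairs m, μ ^ (p.1 + p.2 - m) * (c p.1 * c p.2)
      = ∑ p ∈ highPairs m, μ ^ (p.1 + p.2) * (c p.1 * c p.2) := by
    rw [mul_sum]
    refine sum_congr rfl fun p hp => ?_
    rw [← mul_assoc, ← pow_add, Nat.add_sub_cancel' (mem_filter.1 hp).2]
  have hcoeff : ∑ k ∈ range m, μ ^ k * (d k + 2 * c (k + 1) + ∑ p ∈ antidiagonal k, c p.1 * c p.2)
      = -B := by
    obtain ⟨n, rfl⟩ := Nat.exists_eq_add_of_le' hm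
    rw [sum_range_succ', sum_eq_zero fun k hk => by
      rw [hrec (k + 1) le_add_self (by simpa using hk), mul_zero]]
    simp only [Nat.antidiagonal_zero, sum_singleton]
    linear_combination h₀
  simp only [mul_add, sum_add_distrib] at hcoeff
  rw [hshift, sq_sum_range_pow_mul, mul_add, hhigh, sum_range_succ]
  linear_combination hcoeff

section PhiCoeff

variable {a b : ℝ → ℝ}

theorem phiCoeffP_zero_recurrence {x : ℝ} (hx : x ∈ Set.Icc (0 : ℝ) 1)
    (ha : DifferentiableWithinAt ℝ a (Set.Icc 0 1) x) :
    derivWithin (phiCoeffP a b 0) (Set.Icc 0 1) x + 2 * phiCoeffP a b 1 x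
      + phiCoeffP a b 0 x * phiCoeffP a b 0 x + b x = 0 := by
  rw [phiCoeffP.eq_1, phiCoeffP.eq_2,
    ha.hasDerivWithinAt.ofReal_comp.derivWithin (uniqueDiffOn_Icc zero_lt_one x hx)]
  push_cast
  ring

theorem phiCoeffP_recurrence {k : ℕ} (hk : 1 ≤ k) (x : ℝ) :
    derivWithin (phiCoeffP a b k) (Set.Icc 0 1) x + 2 * phiCoeffP a b (k + 1) x
      + ∑ p ∈ antidiagonal k, phiCoeffP a b p.1 x * phiCoeffP a b p.2 x = 0 := by
  obtain ⟨j, rfl⟩ := Nat.exists_eq_add_of_le' hk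
  rw [phiCoeffP.eq_3]
  beta_reduce
  rw [sum_attach (range (j + 2)) fun i => phiCoeffP a b i x * phiCoeffP a b (j + 1 - i) x,
    Nat.sum_antidiagonal_eq_sum_range_succ fun i l => phiCoeffP a b i x * phiCoeffP a b l x]
  ring

theorem contDiffOn_phiCoeffP {m : ℕ} (ha : ContDiffOn ℝ (m + 1) a (Set.Icc 0 1))
    (hb : ContDiffOn ℝ m b (Set.Icc 0 1)) :
    ∀ i ≤ m, ContDiffOn ℝ (m + 1 - i : ℕ) (phiCoeffP a b i) (Set.Icc 0 1) := by
  have hI : UniqueDiffOn ℝ (Set.Icc (0 : ℝ) 1) := uniqueDiffOn_Icc zero_lt_one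
  intro i
  induction i using Nat.strong_induction_on with
  | _ i ih =>
    match i with
    | 0 =>
      intro _
      rw [phiCoeffP.eq_1]
      exact Complex.ofRealCLM.contDiff.comp_contDiffOn (by exact_mod_cast ha)
    | 1 =>
      intro _
      rw [phiCoeffP.eq_2, Nat.add_sub_cancel]
      refine Complex.ofRealCLM.contDiff.comp_contDiffOn (ContDiffOn.div_const (.neg ?_) 2)
      exact ((ha.derivWithin hI le_rfl).add ((ha.of_le le_self_add).pow 2)).add hb
    | j + 2 =>
      intro hj
      have hderiv : ContDiffOn ℝ (m + 1 - (j + 2) : ℕ)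
          (derivWithin (phiCoeffP a b (j + 1)) (Set.Icc 0 1)) (Set.Icc 0 1) :=
        (ih (j + 1) (by omega) (by omega)).derivWithin hI (by exact_mod_cast (by omega))
      have hconv : ∀ i ∈ (range (j + 2)).attach, ContDiffOn ℝ (m + 1 - (j + 2) : ℕ)
          (fun x => phiCoeffP a b i x * phiCoeffP a b (j + 1 - i) x) (Set.Icc 0 1) := by
        rintro ⟨i, hi⟩ -
        rw [mem_range] at hi
        exact ((ih i (by omega) (by omega)).of_le (by exact_mod_cast (by omega))).mul
          ((ih (j + 1 - i) (by omega) (by omega)).of_le (by exact_mod_cast (by omega)))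
      rw [phiCoeffP.eq_3]
      exact contDiffOn_const.mul (hderiv.add (ContDiffOn.sum hconv))

end PhiCoeff

section Ufun

variable {a b : ℝ → ℝ} {m : ℕ} {l : ℂ} {x : ℝ}

noncomputable def ufunExponent (a b : ℝ → ℝ) (m : ℕ) (l : ℂ) (y : ℝ) : ℂ :=
  l * y + ∑ i ∈ range (m + 1), l ^ (-(i : ℤ)) * ∫ t in (0 : ℝ)..y, phiCoeffP a b i t

theorem Ufun_eq_exp : Ufun a b m l = fun y => Complex.exp (ufunExponent a b m l y) := rfl

theorem Ufun_zero : Ufun a b m l 0 = 1 := by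
  simp [Ufun]

theorem hasDerivWithinAt_ufunExponent
    (hφ : ∀ i ≤ m, ContinuousOn (phiCoeffP a b i) (Set.Icc 0 1)) (hx : x ∈ Set.Icc (0 : ℝ) 1) :
    HasDerivWithinAt (ufunExponent a b m l)
      (l + ∑ i ∈ range (m + 1), l ^ (-(i : ℤ)) * phiCoeffP a b i x) (Set.Icc 0 1) x := by
  have hlin : HasDerivWithinAt (fun y : ℝ => l * y) l (Set.Icc 0 1) x := by
    simpa using ((hasDerivAt_id x).ofReal_comp.const_mul l).hasDerivWithinAt
  refine hlin.add (HasDerivWithinAt.fun_sum fun i hi => ?_)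
  exact (hasDerivWithinAt_primitive_Icc (hφ i (Nat.lt_succ_iff.1 (mem_range.1 hi))) hx).const_mul _

theorem derivWithin_Ufun (hφ : ∀ i ≤ m, ContinuousOn (phiCoeffP a b i) (Set.Icc 0 1))
    (hx : x ∈ Set.Icc (0 : ℝ) 1) :
    derivWithin (Ufun a b m l) (Set.Icc 0 1) x
      = (l + ∑ i ∈ range (m + 1), l ^ (-(i : ℤ)) * phiCoeffP a b i x) * Ufun a b m l x := by
  rw [Ufun_eq_exp]
  exact ((hasDerivWithinAt_ufunExponent hφ hx).cexp.derivWithin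
    (uniqueDiffOn_Icc zero_lt_one x hx)).trans (mul_comm _ _)

theorem derivWithin_derivWithin_Ufun (hφ : ∀ i ≤ m, ContDiffOn ℝ 1 (phiCoeffP a b i) (Set.Icc 0 1))
    (hx : x ∈ Set.Icc (0 : ℝ) 1) :
    derivWithin (derivWithin (Ufun a b m l) (Set.Icc 0 1)) (Set.Icc 0 1) x
      = (∑ i ∈ range (m + 1), l ^ (-(i : ℤ)) * derivWithin (phiCoeffP a b i) (Set.Icc 0 1) x
          + (l + ∑ i ∈ range (m + 1), l ^ (-(i : ℤ)) * phiCoeffP a b i x) ^ 2)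
        * Ufun a b m l x := by
  have hP : HasDerivWithinAt (fun y => l + ∑ i ∈ range (m + 1), l ^ (-(i : ℤ)) * phiCoeffP a b i y)
      (∑ i ∈ range (m + 1), l ^ (-(i : ℤ)) * derivWithin (phiCoeffP a b i) (Set.Icc 0 1) x)
      (Set.Icc 0 1) x := by
    refine (HasDerivWithinAt.fun_sum fun i hi => ?_).const_add l
    exact (((hφ i (Nat.lt_succ_iff.1 (mem_range.1 hi))).differentiableOn one_ne_zero x
      hx).hasDerivWithinAt).const_mul _
  have hS : ∀ y ∈ Set.Icc (0 : ℝ) 1, HasDerivWithinAt (ufunExponent a b m l)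
      (l + ∑ i ∈ range (m + 1), l ^ (-(i : ℤ)) * phiCoeffP a b i y) (Set.Icc 0 1) y :=
    fun y hy => hasDerivWithinAt_ufunExponent (fun i hi => (hφ i hi).continuousOn) hy
  simpa only [Ufun_eq_exp] using
    derivWithin_derivWithin_cexp (uniqueDiffOn_Icc zero_lt_one) hS hP hx

theorem contDiffOn_Ufun (hφ : ∀ i ≤ m, ContDiffOn ℝ 1 (phiCoeffP a b i) (Set.Icc 0 1)) :
    ContDiffOn ℝ 2 (Ufun a b m l) (Set.Icc 0 1) := by
  rw [Ufun_eq_exp]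
  refine Complex.contDiff_exp.comp_contDiffOn
    ((contDiff_const.mul Complex.ofRealCLM.contDiff).contDiffOn.add (ContDiffOn.sum fun i hi => ?_))
  exact contDiffOn_const.mul
    ((hφ i (Nat.lt_succ_iff.1 (mem_range.1 hi))).primitive_Icc (n := 1) zero_lt_one)

end Ufun

section Remainder

variable {a b : ℝ → ℝ} {m : ℕ} {l : ℂ} {x : ℝ}

/-- The paper's `f_m(x, λ)`. -/
noncomputable def ufunRemainder (a b : ℝ → ℝ) (m : ℕ) (l : ℂ) (x : ℝ) : ℂ :=
  (derivWithin (phiCoeffP a b m) (Set.Icc 0 1) x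
      + ∑ p ∈ highPairs m, l⁻¹ ^ (p.1 + p.2 - m) * (phiCoeffP a b p.1 x * phiCoeffP a b p.2 x))
    * Complex.exp (∑ i ∈ range (m + 1), l⁻¹ ^ i * ∫ t in (0 : ℝ)..x, phiCoeffP a b i t)

theorem Ufun_riccati (hm : 1 ≤ m) (hl : l ≠ 0)
    (hφ : ∀ i ≤ m, ContDiffOn ℝ 1 (phiCoeffP a b i) (Set.Icc 0 1))
    (ha : DifferentiableWithinAt ℝ a (Set.Icc 0 1) x) (hx : x ∈ Set.Icc (0 : ℝ) 1) :
    derivWithin (derivWithin (Ufun a b m l) (Set.Icc 0 1)) (Set.Icc 0 1) x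
        - l ^ 2 * Ufun a b m l x - 2 * l * (a x : ℂ) * Ufun a b m l x + (b x : ℂ) * Ufun a b m l x
      = l ^ (-(m : ℤ)) * Complex.exp (l * x) * ufunRemainder a b m l x := by
  have key := riccati_truncation hm (mul_inv_cancel₀ hl) (fun i => phiCoeffP a b i x)
    (fun i => derivWithin (phiCoeffP a b i) (Set.Icc 0 1) x) (b x)
    (phiCoeffP_zero_recurrence hx ha) fun k hk _ => phiCoeffP_recurrence hk x
  have ha₀ : (a x : ℂ) = phiCoeffP a b 0 x := by rw [phiCoeffP.eq_1]
  rw [derivWithin_derivWithin_Ufun hφ hx, Ufun, Complex.exp_add, ufunRemainder, ha₀]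
  simp only [zpow_neg, zpow_natCast, ← inv_pow] at key ⊢
  linear_combination Complex.exp (l * x)
    * Complex.exp (∑ i ∈ range (m + 1), l⁻¹ ^ i * ∫ t in (0 : ℝ)..x, phiCoeffP a b i t) * key

theorem norm_ufunRemainder_le {M M' : ℝ} (hl : 1 ≤ ‖l‖)
    (hM : ∀ i ∈ range (m + 1), ∀ x ∈ Set.Icc (0 : ℝ) 1, ‖phiCoeffP a b i x‖ ≤ M)
    (hM' : ∀ x ∈ Set.Icc (0 : ℝ) 1, ‖derivWithin (phiCoeffP a b m) (Set.Icc 0 1) x‖ ≤ M')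
    (hx : x ∈ Set.Icc (0 : ℝ) 1) :
    ‖ufunRemainder a b m l x‖ ≤ (M' + #(highPairs m) * M ^ 2) * Real.exp ((m + 1) * M) := by
  have hpow : ∀ n : ℕ, ‖l⁻¹ ^ n‖ ≤ 1 := fun n => by
    rw [norm_pow, norm_inv]
    exact pow_le_one₀ (by positivity) (inv_le_one_of_one_le₀ hl)
  have hM₀ : 0 ≤ M := (norm_nonneg _).trans (hM 0 (by simp) x hx)
  have hpoly : ‖derivWithin (phiCoeffP a b m) (Set.Icc 0 1) x
      + ∑ p ∈ highPairs m, l⁻¹ ^ (p.1 + p.2 - m) * (phiCoeffP a b p.1 x * phiCoeffP a b p.2 x)‖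
        ≤ M' + #(highPairs m) * M ^ 2 := by
    refine norm_add_le_of_le (hM' x hx) ?_
    calc _ ≤ ∑ p ∈ highPairs m, M ^ 2 := norm_sum_le_of_le _ fun p hp => by
          obtain ⟨hp₁, hp₂⟩ := mem_product.1 (mem_filter.1 hp).1
          rw [norm_mul, norm_mul, sq, ← one_mul (M * M)]
          exact mul_le_mul (hpow _)
            (mul_le_mul (hM _ hp₁ x hx) (hM _ hp₂ x hx) (norm_nonneg _) hM₀)
            (by positivity) zero_le_one
      _ = #(highPairs m) * M ^ 2 := by rw [sum_const, nsmul_eq_mul]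
  have hexp : ‖Complex.exp (∑ i ∈ range (m + 1), l⁻¹ ^ i * ∫ t in (0 : ℝ)..x, phiCoeffP a b i t)‖
      ≤ Real.exp ((m + 1) * M) := by
    rw [Complex.norm_exp]
    refine Real.exp_le_exp.2 ((Complex.re_le_norm _).trans ?_)
    calc _ ≤ ∑ i ∈ range (m + 1), M := norm_sum_le_of_le _ fun i hi => by
          rw [norm_mul, ← one_mul M]
          refine mul_le_mul (hpow i) ?_ (norm_nonneg _) zero_le_one
          simpa using norm_primitive_le (hM i hi) hx
      _ = (m + 1) * M := by simp
  rw [ufunRemainder, norm_mul]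
  exact mul_le_mul hpoly hexp (norm_nonneg _) ((norm_nonneg _).trans hpoly)

end Remainder

/-- for `a ∈ C^{m+1}[0,1]`, `b ∈ C^m[0,1]`, `m ≥ 1` and `λ` large,
`U_m(·,λ) ∈ C²[0,1]`, `U_m(0,λ) = 1`, `U_m'(0,λ) = λ + Σ_{i=0}^m φᵢ^{(+)}(0) λ^{−i}`,
and `U_m'' − λ²U_m − 2λaU_m + bU_m = λ^{−m} e^{λx} f_m(x,λ)` with `|f_m(x,λ)| ≤ C_m`
uniformly in `x ∈ [0,1]` and large `|λ|`. -/
theorem Um_properties (m : ℕ) (hm : 1 ≤ m) (a b : ℝ → ℝ)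
    (ha : ContDiffOn ℝ (m + 1) a (Set.Icc 0 1))
    (hb : ContDiffOn ℝ m b (Set.Icc 0 1)) :
    ∃ (C R : ℝ) (f : ℂ → ℝ → ℂ), 0 < C ∧ 0 < R ∧
      ∀ l : ℂ, R ≤ ‖l‖ →
        ContDiffOn ℝ 2 (Ufun a b m l) (Set.Icc 0 1) ∧
        Ufun a b m l 0 = 1 ∧
        derivWithin (Ufun a b m l) (Set.Icc 0 1) 0
          = l + ∑ i ∈ Finset.range (m + 1), phiCoeffP a b i 0 * l ^ (-(i : ℤ)) ∧
        (∀ x ∈ Set.Icc (0:ℝ) 1,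
          derivWithin (derivWithin (Ufun a b m l) (Set.Icc 0 1)) (Set.Icc 0 1) x
              - l ^ 2 * Ufun a b m l x - 2 * l * (a x : ℂ) * Ufun a b m l x
              + (b x : ℂ) * Ufun a b m l x
            = l ^ (-(m : ℤ)) * Complex.exp (l * x) * f l x ∧
          ‖f l x‖ ≤ C) := by
  have hφ : ∀ i ≤ m, ContDiffOn ℝ 1 (phiCoeffP a b i) (Set.Icc 0 1) := fun i hi =>
    (contDiffOn_phiCoeffP ha hb i hi).of_le (by exact_mod_cast (by omega : 1 ≤ m + 1 - i))
  obtain ⟨M, hM⟩ := isCompact_Icc.exists_bound_of_continuousOn_finset (range (m + 1))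
    fun i hi => (hφ i (Nat.lt_succ_iff.1 (mem_range.1 hi))).continuousOn
  obtain ⟨M', hM'⟩ := isCompact_Icc.exists_bound_of_continuousOn
    ((hφ m le_rfl).continuousOn_derivWithin (uniqueDiffOn_Icc zero_lt_one) le_rfl)
  refine ⟨max ((M' + #(highPairs m) * M ^ 2) * Real.exp ((m + 1) * M)) 1, 1, ufunRemainder a b m,
    lt_max_of_lt_right one_pos, one_pos, fun l hl => ⟨contDiffOn_Ufun hφ, Ufun_zero, ?_,
      fun x hx => ⟨?_, (norm_ufunRemainder_le hl hM hM' hx).trans (le_max_left _ _)⟩⟩⟩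
  · rw [derivWithin_Ufun (fun i hi => (hφ i hi).continuousOn) ⟨le_rfl, zero_le_one⟩, Ufun_zero,
      mul_one]
    simp_rw [mul_comm (phiCoeffP a b _ 0)]
  · exact Ufun_riccati hm (norm_pos_iff.1 (one_pos.trans_le hl)) hφ
      ((ha.differentiableOn (by simp)) x hx) hx
end

section
/- Let a ∈ C²[0,1] and b ∈ C¹[0,1] be real-valued, and let γ_0(λ) = u(1,λ) where u(·,λ) solves u'' − (λ² + 2λ a − b)u = 0 with u(0,λ) = 0, u'(0,λ) = 1. Then there is a constant C such that |γ_0(λ)| ≤ C|λ|^{−1} e^{|λ|} for all sufficiently large |λ|; consequently γ_0 is an entire function of order one, and the series Σ_{n>p} |λ_n|^{−2} over its nonzero zeros λ_n converges, so the genus of the canonical product associated with γ_0 is one. -/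
/-!
With `K` bounding `|a|` and `√|b|`, the coefficient `q = λ² + 2λa − b` satisfies
`|q| ≤ (|λ| + K)²`, and Grönwall's inequality for the first-order system `(μ u, u')`,
`μ = |λ| + K`, gives `μ |u(1, λ)| ≤ e^μ`: this is the growth estimate, and shows that `γ₀`
has exponential type. For real `λ = t ≥ 4K` the coefficient is real and at least `(t/2)²`,
so comparison with `sinh (t x / 2)` gives `u(1, t) ≥ e^{t/2} / (2t)`; hence the order is not
below one and `γ₀ ≢ 0`. Dividing out the zeros in a disc and applying the maximum modulus
principle on a disc four times larger bounds the number of zeros with `|λ| ≤ s` by `D s`,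
and summing `|λ_n|⁻²` over dyadic shells then converges.
-/

open Set Filter Topology Metric

structure IsSineTypeSolution {𝕜 : Type*} [NormedField 𝕜] [NormedAlgebra ℝ 𝕜]
    (q v : ℝ → 𝕜) : Prop where
  contDiffOn : ContDiffOn ℝ 2 v (Icc 0 1)
  deriv_deriv : ∀ x ∈ Ioo (0:ℝ) 1, deriv (deriv v) x = q x * v x
  apply_zero : v 0 = 0
  derivWithin_zero : derivWithin v (Icc 0 1) 0 = 1

namespace IsSineTypeSolution

section NormedField

variable {𝕜 : Type*} [NormedField 𝕜] [NormedAlgebra ℝ 𝕜] {q v : ℝ → 𝕜}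

theorem continuousOn (h : IsSineTypeSolution q v) : ContinuousOn v (Icc 0 1) :=
  h.contDiffOn.continuousOn

theorem contDiffOn_derivWithin (h : IsSineTypeSolution q v) :
    ContDiffOn ℝ 1 (derivWithin v (Icc 0 1)) (Icc 0 1) :=
  h.contDiffOn.derivWithin (uniqueDiffOn_Icc one_pos) (by norm_num)

theorem hasDerivWithinAt (h : IsSineTypeSolution q v) {x : ℝ} (hx : x ∈ Icc (0:ℝ) 1) :
    HasDerivWithinAt v (derivWithin v (Icc 0 1) x) (Icc 0 1) x :=
  (h.contDiffOn.differentiableOn (by norm_num) x hx).hasDerivWithinAt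

theorem hasDerivAt (h : IsSineTypeSolution q v) {x : ℝ} (hx : x ∈ Ioo (0:ℝ) 1) :
    HasDerivAt v (derivWithin v (Icc 0 1) x) x :=
  (h.hasDerivWithinAt (Ioo_subset_Icc_self hx)).hasDerivAt (Icc_mem_nhds hx.1 hx.2)

theorem hasDerivAt_derivWithin (h : IsSineTypeSolution q v) {x : ℝ} (hx : x ∈ Ioo (0:ℝ) 1) :
    HasDerivAt (derivWithin v (Icc 0 1)) (q x * v x) x := by
  have hd : DifferentiableAt ℝ (derivWithin v (Icc 0 1)) x :=
    (h.contDiffOn_derivWithin.differentiableOn one_ne_zero x (Ioo_subset_Icc_self hx)).differentiableAt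
      (Icc_mem_nhds hx.1 hx.2)
  have heq : derivWithin v (Icc 0 1) =ᶠ[𝓝 x] deriv v := by
    filter_upwards [Ioo_mem_nhds hx.1 hx.2] with y hy
    exact derivWithin_of_mem_nhds (Icc_mem_nhds hy.1 hy.2)
  rw [← h.deriv_deriv x hx, ← heq.deriv_eq]
  exact hd.hasDerivAt

theorem norm_derivWithin_derivWithin_le (h : IsSineTypeSolution q v) {K : ℝ}
    (hq : ∀ x ∈ Ioo (0:ℝ) 1, ‖q x‖ ≤ K) {x : ℝ} (hx : x ∈ Icc (0:ℝ) 1) :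
    ‖derivWithin (derivWithin v (Icc 0 1)) (Icc 0 1) x‖ ≤ K * ‖v x‖ := by
  rw [← closure_Ioo zero_ne_one] at hx
  refine le_on_closure (f := fun x => ‖derivWithin (derivWithin v (Icc 0 1)) (Icc 0 1) x‖)
    (g := fun x => K * ‖v x‖) (fun y hy => ?_) ?_ ?_ hx
  · rw [derivWithin_of_mem_nhds (Icc_mem_nhds hy.1 hy.2), (h.hasDerivAt_derivWithin hy).deriv,
      norm_mul]
    exact mul_le_mul_of_nonneg_right (hq y hy) (norm_nonneg _)
  · rw [closure_Ioo zero_ne_one]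
    exact (h.contDiffOn_derivWithin.continuousOn_derivWithin (uniqueDiffOn_Icc one_pos)
      le_rfl).norm
  · rw [closure_Ioo zero_ne_one]
    exact continuousOn_const.mul h.continuousOn.norm

/-- Grönwall's inequality for the system `(μ v, v')`, whose derivative `(μ v', q v)` has norm
at most `μ` times its norm. -/
theorem mul_norm_le_exp (h : IsSineTypeSolution q v) {μ : ℝ} (hμ : 0 ≤ μ)
    (hq : ∀ x ∈ Ioo (0:ℝ) 1, ‖q x‖ ≤ μ ^ 2) : μ * ‖v 1‖ ≤ Real.exp μ := by
  set v' := derivWithin v (Icc 0 1)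
  set v'' := derivWithin v' (Icc 0 1)
  have hnorm : ∀ z w : 𝕜, ‖(μ • z, w)‖ = max (μ * ‖z‖) ‖w‖ := fun z w => by
    rw [Prod.norm_def, norm_smul, Real.norm_of_nonneg hμ]
  have hcont : ContinuousOn (fun x => (μ • v x, v' x)) (Icc 0 1) :=
    (h.continuousOn.const_smul μ).prodMk h.contDiffOn_derivWithin.continuousOn
  have hderiv : ∀ x ∈ Ico (0:ℝ) 1,
      HasDerivWithinAt (fun x => (μ • v x, v' x)) (μ • v' x, v'' x) (Ici x) x := by
    intro x hx
    have hxI : x ∈ Icc (0:ℝ) 1 := Ico_subset_Icc_self hx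
    exact (((h.hasDerivWithinAt hxI).const_smul μ).prodMk
      (h.contDiffOn_derivWithin.differentiableOn one_ne_zero x hxI).hasDerivWithinAt).mono_of_mem_nhdsWithin
      (Icc_mem_nhdsGE_of_mem hx)
  have hbound : ∀ x ∈ Ico (0:ℝ) 1, ‖(μ • v' x, v'' x)‖ ≤ μ * ‖(μ • v x, v' x)‖ + 0 := by
    intro x hx
    rw [add_zero, hnorm, hnorm]
    refine max_le (mul_le_mul_of_nonneg_left (le_max_right _ _) hμ) ?_
    calc ‖v'' x‖ ≤ μ ^ 2 * ‖v x‖ := h.norm_derivWithin_derivWithin_le hq (Ico_subset_Icc_self hx)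
      _ = μ * (μ * ‖v x‖) := by ring
      _ ≤ μ * max (μ * ‖v x‖) ‖v' x‖ := mul_le_mul_of_nonneg_left (le_max_left _ _) hμ
  have hinit : ‖(μ • v 0, v' 0)‖ ≤ 1 := by simp [v', h.apply_zero, h.derivWithin_zero]
  have := norm_le_gronwallBound_of_norm_deriv_right_le hcont hderiv hinit hbound 1
    (right_mem_Icc.2 zero_le_one)
  rw [gronwallBound_ε0, sub_zero, one_mul, mul_one, hnorm] at this
  exact (le_max_left _ _).trans this

end NormedField

theorem re {𝕜 : Type*} [RCLike 𝕜] {Q : ℝ → ℝ} {v : ℝ → 𝕜}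
    (h : IsSineTypeSolution (fun x => (Q x : 𝕜)) v) :
    IsSineTypeSolution Q fun x => RCLike.re (v x) := by
  have hre : (fun x => RCLike.re (v x)) = RCLike.reCLM ∘ v := rfl
  refine ⟨?_, fun x hx => ?_, by simp [h.apply_zero], ?_⟩
  · exact hre ▸ RCLike.reCLM.contDiff.comp_contDiffOn h.contDiffOn
  · have heq : deriv (fun x => RCLike.re (v x)) =ᶠ[𝓝 x]
        fun y => RCLike.re (derivWithin v (Icc 0 1) y) := by
      filter_upwards [Ioo_mem_nhds hx.1 hx.2] with y hy
      exact (RCLike.reCLM.hasFDerivAt.comp_hasDerivAt y (h.hasDerivAt hy)).deriv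
    have hre' : HasDerivAt (fun y => RCLike.re (derivWithin v (Icc 0 1) y))
        (RCLike.re ((Q x : 𝕜) * v x)) x :=
      (RCLike.reCLM (K := 𝕜)).hasFDerivAt.comp_hasDerivAt x (h.hasDerivAt_derivWithin hx)
    rw [heq.deriv_eq, hre'.deriv, RCLike.re_ofReal_mul]
  · have h1 := h.hasDerivWithinAt (left_mem_Icc.2 zero_le_one)
    rw [h.derivWithin_zero] at h1
    rw [hre, (RCLike.reCLM.hasFDerivAt.comp_hasDerivWithinAt 0 h1).derivWithin
      (uniqueDiffOn_Icc one_pos 0 (left_mem_Icc.2 zero_le_one))]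
    simp

end IsSineTypeSolution

theorem monotoneOn_Icc_of_hasDerivAt_nonneg {f f' : ℝ → ℝ} {a b : ℝ}
    (hf : ContinuousOn f (Icc a b)) (hf' : ∀ x ∈ Ioo a b, HasDerivAt f (f' x) x)
    (hf'₀ : ∀ x ∈ Ioo a b, 0 ≤ f' x) : MonotoneOn f (Icc a b) :=
  monotoneOn_of_hasDerivWithinAt_nonneg (convex_Icc a b) hf
    (by simpa only [interior_Icc] using fun x hx => (hf' x hx).hasDerivWithinAt)
    (by simpa only [interior_Icc] using hf'₀)

theorem exp_mul_sub_mul_le_of_hasDerivAt {g g' : ℝ → ℝ} {a b c : ℝ}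
    (hg : ContinuousOn g (Icc a b)) (hg' : ∀ x ∈ Ioo a b, HasDerivAt g (g' x) x)
    (hc : ∀ x ∈ Ioo a b, c * g x ≤ g' x) {x : ℝ} (hx : x ∈ Icc a b) :
    Real.exp (c * (x - a)) * g a ≤ g x := by
  have hmono : MonotoneOn (fun y => Real.exp (-(c * (y - a))) * g y) (Icc a b) := by
    refine monotoneOn_Icc_of_hasDerivAt_nonneg
      (f' := fun y => Real.exp (-(c * (y - a))) * (g' y - c * g y)) (by fun_prop)
      (fun y hy => ?_) fun y hy => mul_nonneg (Real.exp_pos _).le (sub_nonneg.2 (hc y hy))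
    exact ((((hasDerivAt_id y).sub_const a).const_mul c).neg.exp.mul (hg' y hy)).congr_deriv
      (by simp only [Pi.neg_apply, id_eq, mul_one]; ring)
  have := hmono (left_mem_Icc.2 (hx.1.trans hx.2)) hx hx.1
  simp only [sub_self, mul_zero, neg_zero, Real.exp_zero, one_mul] at this
  calc Real.exp (c * (x - a)) * g a
      ≤ Real.exp (c * (x - a)) * (Real.exp (-(c * (x - a))) * g x) := by gcongr
    _ = g x := by rw [← mul_assoc, ← Real.exp_add, add_neg_cancel, Real.exp_zero, one_mul]

namespace IsSineTypeSolution

variable {Q w : ℝ → ℝ}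

theorem derivWithin_pos (h : IsSineTypeSolution Q w) (hQ : ∀ x ∈ Ioo (0:ℝ) 1, 0 ≤ Q x)
    {x : ℝ} (hx : x ∈ Icc (0:ℝ) 1) : 0 < derivWithin w (Icc 0 1) x := by
  set w' := derivWithin w (Icc 0 1)
  by_contra! hx'
  set S := Icc (0:ℝ) 1 ∩ w' ⁻¹' Iic 0
  have hSbdd : BddBelow S := ⟨0, fun y hy => hy.1.1⟩
  have hzS : sInf S ∈ S :=
    (h.contDiffOn_derivWithin.continuousOn.preimage_isClosed_of_isClosed isClosed_Icc
      isClosed_Iic).csInf_mem ⟨x, hx, hx'⟩ hSbdd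
  set z := sInf S
  have hz1 : z ≤ 1 := hzS.1.2
  have hw'pos : ∀ y ∈ Ioo 0 z, 0 ≤ w' y := fun y hy => by
    by_contra! hy'
    exact (csInf_le hSbdd ⟨⟨hy.1.le, hy.2.le.trans hz1⟩, hy'.le⟩).not_gt hy.2
  have hw_mono : MonotoneOn w (Icc 0 z) :=
    monotoneOn_Icc_of_hasDerivAt_nonneg (h.continuousOn.mono (Icc_subset_Icc_right hz1))
      (fun y hy => h.hasDerivAt ⟨hy.1, hy.2.trans_le hz1⟩) hw'pos
  have hw'_mono : MonotoneOn w' (Icc 0 z) := by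
    refine monotoneOn_Icc_of_hasDerivAt_nonneg
      (h.contDiffOn_derivWithin.continuousOn.mono (Icc_subset_Icc_right hz1))
      (fun y hy => h.hasDerivAt_derivWithin ⟨hy.1, hy.2.trans_le hz1⟩) fun y hy => ?_
    have hwy := hw_mono (left_mem_Icc.2 hzS.1.1) (Ioo_subset_Icc_self hy) hy.1.le
    rw [h.apply_zero] at hwy
    exact mul_nonneg (hQ y ⟨hy.1, hy.2.trans_le hz1⟩) hwy
  have := hw'_mono (left_mem_Icc.2 hzS.1.1) (right_mem_Icc.2 hzS.1.1) hzS.1.1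
  rw [show w' 0 = 1 from h.derivWithin_zero] at this
  exact absurd (this.trans hzS.2) (by norm_num)

theorem nonneg (h : IsSineTypeSolution Q w) (hQ : ∀ x ∈ Ioo (0:ℝ) 1, 0 ≤ Q x)
    {x : ℝ} (hx : x ∈ Icc (0:ℝ) 1) : 0 ≤ w x := by
  have := monotoneOn_Icc_of_hasDerivAt_nonneg h.continuousOn (fun y hy => h.hasDerivAt hy)
    (fun y hy => (h.derivWithin_pos hQ (Ioo_subset_Icc_self hy)).le)
    (left_mem_Icc.2 zero_le_one) hx hx.1
  rwa [h.apply_zero] at this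

/-- Comparison with `sinh (m x) / m`: first `w' + m w ≥ e^{m x}`, then integrating
`(e^{m x} w)' ≥ e^{2 m x}` gives `w 1 ≥ sinh m / m`. -/
theorem exp_div_le (h : IsSineTypeSolution Q w) {m : ℝ} (hm : 1 ≤ m)
    (hQ : ∀ x ∈ Ioo (0:ℝ) 1, m ^ 2 ≤ Q x) : Real.exp m / (4 * m) ≤ w 1 := by
  set w' := derivWithin w (Icc 0 1)
  have hQ0 : ∀ x ∈ Ioo (0:ℝ) 1, 0 ≤ Q x := fun x hx => (sq_nonneg m).trans (hQ x hx)
  have hg : ∀ x ∈ Icc (0:ℝ) 1, Real.exp (m * x) ≤ w' x + m * w x := by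
    intro x hx
    have := exp_mul_sub_mul_le_of_hasDerivAt (g := fun y => w' y + m * w y)
      (h.contDiffOn_derivWithin.continuousOn.add (h.continuousOn.const_smul m))
      (fun y hy => (h.hasDerivAt_derivWithin hy).add ((h.hasDerivAt hy).const_mul m))
      (fun y hy => by nlinarith [hQ y hy, h.nonneg hQ0 (Ioo_subset_Icc_self hy)]) hx
    simpa [h.apply_zero, show w' 0 = 1 from h.derivWithin_zero] using this
  have hF : MonotoneOn (fun x => Real.exp (m * x) * w x - Real.exp (m * x) ^ 2 / (2 * m))
      (Icc 0 1) := by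
    refine monotoneOn_Icc_of_hasDerivAt_nonneg
      (f' := fun x => Real.exp (m * x) * (w' x + m * w x - Real.exp (m * x)))
      (((by fun_prop : Continuous fun x => Real.exp (m * x)).continuousOn.mul h.continuousOn).sub
        (by fun_prop : Continuous fun x => Real.exp (m * x) ^ 2 / (2 * m)).continuousOn)
      (fun x hx => ?_) fun x hx => ?_
    · have he := ((hasDerivAt_id' x).const_mul m).exp
      refine ((he.mul (h.hasDerivAt hx)).sub ((he.pow 2).div_const (2 * m))).congr_deriv ?_
      field_simp
      ring
    · exact mul_nonneg (Real.exp_pos _).le (by linarith [hg x (Ioo_subset_Icc_self hx)])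
  have h01 := hF (left_mem_Icc.2 zero_le_one) (right_mem_Icc.2 zero_le_one) zero_le_one
  simp only [mul_zero, Real.exp_zero, h.apply_zero, mul_one, one_pow] at h01
  have h2m : 0 < 2 * m := by positivity
  have key : (Real.exp m ^ 2 - 1) / (2 * m) ≤ Real.exp m * w 1 := by rw [sub_div]; linarith
  rw [div_le_iff₀ h2m] at key
  have hE : 2 ≤ Real.exp m := by linarith [Real.add_one_le_exp m]
  rw [div_le_iff₀ (by positivity)]
  nlinarith [Real.exp_pos m]

end IsSineTypeSolution

theorem Differentiable.exists_eq_prod_sub_mul {f : ℂ → ℂ} (hf : Differentiable ℂ f)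
    (S : Finset ℂ) (hS : ∀ a ∈ S, f a = 0) :
    ∃ g : ℂ → ℂ, Differentiable ℂ g ∧ ∀ z, f z = (∏ a ∈ S, (z - a)) * g z := by
  classical
  induction S using Finset.induction_on generalizing f with
  | empty => exact ⟨f, hf, fun z => by simp⟩
  | @insert a S ha ih =>
    have hfa : f a = 0 := hS a (Finset.mem_insert_self a S)
    have hfactor : ∀ z, f z = (z - a) * dslope f a z := fun z => by
      rw [← smul_eq_mul, sub_smul_dslope, hfa, sub_zero]
    have hd : Differentiable ℂ (dslope f a) := by
      rw [← differentiableOn_univ] at hf ⊢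
      exact (Complex.differentiableOn_dslope univ_mem).2 hf
    obtain ⟨g, hg, hfg⟩ := ih hd fun b hb => by
      have hba : b ≠ a := fun hab => ha (hab ▸ hb)
      have := hfactor b
      rw [hS b (Finset.mem_insert_of_mem hb)] at this
      exact (mul_eq_zero.1 this.symm).resolve_left (sub_ne_zero.2 hba)
    exact ⟨g, hg, fun z => by rw [Finset.prod_insert ha, hfactor z, hfg z, mul_assoc]⟩

/-- Each factor `z - a` of the divided-out zeros has modulus at least `3 s` on the sphere and at
most `s` at its centre, so the maximum modulus principle for the quotient loses `3 ^ #S`. -/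
theorem Differentiable.norm_mul_three_pow_card_le {f : ℂ → ℂ} (hf : Differentiable ℂ f)
    {z₀ : ℂ} {s M : ℝ} (hs : 0 < s) (hM : ∀ z ∈ sphere z₀ (4 * s), ‖f z‖ ≤ M)
    {S : Finset ℂ} (hS₀ : ∀ a ∈ S, f a = 0) (hS : ∀ a ∈ S, a ∈ closedBall z₀ s) :
    ‖f z₀‖ * 3 ^ S.card ≤ M := by
  obtain ⟨g, hg, hfg⟩ := hf.exists_eq_prod_sub_mul S hS₀
  have hprod_sphere : ∀ z ∈ sphere z₀ (4 * s), (3 * s) ^ S.card ≤ ‖∏ a ∈ S, (z - a)‖ := by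
    intro z hz
    rw [norm_prod, ← Finset.prod_const]
    refine Finset.prod_le_prod (fun _ _ => by positivity) fun a ha => ?_
    have := dist_triangle z a z₀
    rw [mem_sphere.1 hz] at this
    rw [← dist_eq_norm]
    linarith [mem_closedBall.1 (hS a ha)]
  have hprod_centre : ‖∏ a ∈ S, (z₀ - a)‖ ≤ s ^ S.card := by
    rw [norm_prod, ← Finset.prod_const]
    exact Finset.prod_le_prod (fun _ _ => norm_nonneg _) fun a ha => by
      rw [← dist_eq_norm, dist_comm]; exact mem_closedBall.1 (hS a ha)
  have hg_sphere : ∀ z ∈ frontier (ball z₀ (4 * s)), ‖g z‖ ≤ M / (3 * s) ^ S.card := by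
    rw [frontier_ball z₀ (by positivity)]
    intro z hz
    rw [le_div_iff₀ (by positivity)]
    calc ‖g z‖ * (3 * s) ^ S.card ≤ ‖g z‖ * ‖∏ a ∈ S, (z - a)‖ := by gcongr; exact hprod_sphere z hz
      _ = ‖f z‖ := by rw [hfg, norm_mul, mul_comm]
      _ ≤ M := hM z hz
  have hg_centre : ‖g z₀‖ ≤ M / (3 * s) ^ S.card :=
    Complex.norm_le_of_forall_mem_frontier_norm_le isBounded_ball hg.diffContOnCl hg_sphere
      (subset_closure (mem_ball_self (by positivity)))
  calc ‖f z₀‖ * 3 ^ S.card ≤ s ^ S.card * (M / (3 * s) ^ S.card) * 3 ^ S.card := by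
        rw [hfg, norm_mul]
        gcongr
    _ = M := by rw [mul_pow]; field_simp

theorem Differentiable.exists_card_le_of_norm_le_mul_exp {f : ℂ → ℂ} (hf : Differentiable ℂ f)
    {C : ℝ} (hfC : ∀ z, ‖f z‖ ≤ C * Real.exp ‖z‖) {z₀ : ℂ} (hz₀ : f z₀ ≠ 0) :
    ∃ D : ℝ, ∀ s, 1 ≤ s → ∀ S : Finset ℂ, (∀ a ∈ S, f a = 0) → (∀ a ∈ S, ‖a‖ ≤ s) →
      (S.card : ℝ) ≤ D * s := by
  set c := Real.log (C / ‖f z₀‖) + 5 * ‖z₀‖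
  refine ⟨max c 0 + 4, fun s hs S hS₀ hS => ?_⟩
  have hfz₀ : 0 < ‖f z₀‖ := norm_pos_iff.2 hz₀
  have hC : 0 < C := pos_of_mul_pos_left (hfz₀.trans_le (hfC z₀)) (Real.exp_pos _).le
  have hR : 0 < s + ‖z₀‖ := by positivity
  have hM : ∀ z ∈ sphere z₀ (4 * (s + ‖z₀‖)), ‖f z‖ ≤ C * Real.exp (4 * s + 5 * ‖z₀‖) := by
    intro z hz
    refine (hfC z).trans (mul_le_mul_of_nonneg_left (Real.exp_le_exp.2 ?_)
      hC.le)
    have := norm_le_norm_add_norm_sub' z z₀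
    rw [← dist_eq_norm, mem_sphere.1 hz] at this
    linarith
  have hcount := hf.norm_mul_three_pow_card_le hR hM hS₀ fun a ha => by
    rw [mem_closedBall, dist_eq_norm]
    linarith [norm_sub_le a z₀, hS a ha]
  have hexp : Real.exp S.card ≤ Real.exp (c + 4 * s) := by
    calc Real.exp S.card = Real.exp 1 ^ S.card := by rw [← Real.exp_nat_mul, mul_one]
      _ ≤ 3 ^ S.card := by gcongr; linarith [Real.exp_one_lt_d9]
      _ ≤ C / ‖f z₀‖ * Real.exp (4 * s + 5 * ‖z₀‖) := by
        rw [div_mul_eq_mul_div, le_div_iff₀ hfz₀]; linarith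
      _ = Real.exp (c + 4 * s) := by
        simp only [c, Real.exp_add, Real.exp_log (div_pos hC hfz₀)]
        ring
  have := Real.exp_le_exp.1 hexp
  nlinarith [le_max_left c 0, le_max_right c 0]

theorem sum_zpow_neg_two_le_of_card_le {ι : Type*} {r : ι → ℝ} {D : ℝ}
    (hD : ∀ s, 1 ≤ s → ∀ T : Finset ι, (∀ i ∈ T, r i ≤ s) → (T.card : ℝ) ≤ D * s)
    {T : Finset ι} (hT : ∀ i ∈ T, 1 ≤ r i) : ∑ i ∈ T, r i ^ (-2 : ℤ) ≤ 4 * D := by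
  classical
  choose! j hj using fun i (hi : i ∈ T) => exists_nat_pow_near (hT i hi) one_lt_two
  have hD0 : 0 ≤ D := by simpa using hD 1 le_rfl ∅ (by simp)
  have hshell : ∀ k, ∑ i ∈ T with j i = k, r i ^ (-2 : ℤ) ≤ 2 * D * (1 / 2) ^ k := by
    intro k
    have hcard := hD (2 ^ (k + 1)) (one_le_pow₀ one_le_two) {i ∈ T | j i = k} fun i hi => by
      obtain ⟨hiT, rfl⟩ := Finset.mem_filter.1 hi
      exact (hj i hiT).2.le
    calc ∑ i ∈ T with j i = k, r i ^ (-2 : ℤ) ≤ ∑ i ∈ T with j i = k, ((1 / 4 : ℝ) ^ k) := by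
          refine Finset.sum_le_sum fun i hi => ?_
          obtain ⟨hiT, rfl⟩ := Finset.mem_filter.1 hi
          have h2 : (0 : ℝ) < 2 ^ j i := by positivity
          rw [zpow_neg, zpow_two, show (1 / 4 : ℝ) ^ j i = ((2 ^ j i) * (2 ^ j i))⁻¹ by
            rw [← mul_pow, ← inv_pow]; norm_num]
          have := (hj i hiT).1
          have : 0 ≤ r i := h2.le.trans this
          gcongr
      _ = (({i ∈ T | j i = k}).card : ℝ) * (1 / 4) ^ k := by rw [Finset.sum_const, nsmul_eq_mul]
      _ ≤ D * 2 ^ (k + 1) * (1 / 4) ^ k := by gcongr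
      _ = 2 * D * (1 / 2) ^ k := by
        have h : (2 : ℝ) ^ k * (1 / 2) ^ k = 1 := by rw [← mul_pow]; norm_num
        rw [pow_succ, show (1 / 4 : ℝ) ^ k = (1 / 2) ^ k * (1 / 2) ^ k by rw [← mul_pow]; norm_num]
        linear_combination (2 * D * (1 / 2) ^ k) * h
  rw [← Finset.sum_fiberwise_of_maps_to (fun i hi => Finset.mem_image_of_mem j hi)]
  calc ∑ k ∈ T.image j, ∑ i ∈ T with j i = k, r i ^ (-2 : ℤ)
      ≤ ∑ k ∈ T.image j, 2 * D * (1 / 2 : ℝ) ^ k := Finset.sum_le_sum fun k _ => hshell k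
    _ ≤ 2 * D * 2 := by
      rw [← Finset.mul_sum]
      gcongr
      calc ∑ k ∈ T.image j, (1 / 2 : ℝ) ^ k ≤ ∑' k, (1 / 2 : ℝ) ^ k :=
            Summable.sum_le_tsum _ (fun _ _ => by positivity) summable_geometric_two
        _ = 2 := tsum_geometric_two
    _ = 4 * D := by ring

theorem summable_zpow_neg_two_of_card_le {ι : Type*} {r : ι → ℝ} {D : ℝ}
    (hD : ∀ s, 1 ≤ s → ∀ T : Finset ι, (∀ i ∈ T, r i ≤ s) → (T.card : ℝ) ≤ D * s) :
    Summable fun i => r i ^ (-2 : ℤ) := by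
  classical
  have hsmall : {i | r i ≤ 1}.Finite := by
    by_contra hinf
    obtain ⟨T, hT, hcard⟩ := Set.Infinite.exists_subset_card_eq hinf (⌈D⌉₊ + 1)
    have := hD 1 le_rfl T fun i hi => hT hi
    rw [hcard, mul_one] at this
    push_cast at this
    linarith [Nat.le_ceil D]
  refine summable_of_sum_le (c := ∑ i ∈ hsmall.toFinset, r i ^ (-2 : ℤ) + 4 * D)
    (fun i => Even.zpow_nonneg (by decide) _) fun T => ?_
  rw [← Finset.sum_filter_add_sum_filter_not T fun i => r i ≤ 1]
  gcongr
  · intro i hi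
    simpa using (Finset.mem_filter.1 hi).2
  · exact sum_zpow_neg_two_le_of_card_le hD fun i hi => (not_le.1 (Finset.mem_filter.1 hi).2).le

theorem Differentiable.summable_norm_zpow_neg_two_of_norm_le_mul_exp {ι : Type*}
    {f : ℂ → ℂ} (hf : Differentiable ℂ f) {C : ℝ} (hfC : ∀ z, ‖f z‖ ≤ C * Real.exp ‖z‖)
    {z₀ : ℂ} (hz₀ : f z₀ ≠ 0) {Λ : ι → ℂ} (hΛ : Function.Injective Λ)
    (hzero : ∀ i, f (Λ i) = 0) : Summable fun i => ‖Λ i‖ ^ (-2 : ℤ) := by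
  classical
  obtain ⟨D, hD⟩ := hf.exists_card_le_of_norm_le_mul_exp hfC hz₀
  refine summable_zpow_neg_two_of_card_le (D := D) fun s hs T hT => ?_
  have := hD s hs (T.image Λ) (by simpa using fun i _ => hzero i) (by simpa using hT)
  rwa [Finset.card_image_of_injective _ hΛ] at this

theorem Complex.norm_sq_add_two_mul_sub_le (l : ℂ) {α β K : ℝ} (hα : |α| ≤ K)
    (hβ : |β| ≤ K ^ 2) : ‖l ^ 2 + 2 * l * α - β‖ ≤ (‖l‖ + K) ^ 2 := by
  calc ‖l ^ 2 + 2 * l * α - β‖ ≤ ‖l ^ 2‖ + ‖2 * l * α‖ + ‖(β : ℂ)‖ :=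
        (norm_sub_le _ _).trans (by gcongr; exact norm_add_le _ _)
    _ = ‖l‖ ^ 2 + 2 * ‖l‖ * |α| + |β| := by simp
    _ ≤ (‖l‖ + K) ^ 2 := by nlinarith [norm_nonneg l]

theorem sq_half_le_sq_add_two_mul_sub {t α β K : ℝ} (hα : |α| ≤ K) (hβ : |β| ≤ K ^ 2)
    (ht : 4 * K ≤ t) : (t / 2) ^ 2 ≤ t ^ 2 + 2 * t * α - β := by
  have := abs_le.1 hα
  have := abs_le.1 hβ
  nlinarith [abs_nonneg α]

theorem IsCompact.exists_abs_le_and_abs_le_sq {s : Set ℝ} (hs : IsCompact s) {α β : ℝ → ℝ}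
    (hα : ContinuousOn α s) (hβ : ContinuousOn β s) :
    ∃ K : ℝ, 1 ≤ K ∧ ∀ x ∈ s, |α x| ≤ K ∧ |β x| ≤ K ^ 2 := by
  obtain ⟨A, hA⟩ := hs.exists_bound_of_continuousOn hα
  obtain ⟨B, hB⟩ := hs.exists_bound_of_continuousOn hβ
  refine ⟨max 1 (max A B), le_max_left _ _, fun x hx => ⟨?_, ?_⟩⟩
  · exact (hA x hx).trans (le_max_of_le_right (le_max_left _ _))
  · have hβB : |β x| ≤ B := hB x hx
    have hBK : B ≤ max 1 (max A B) := le_max_of_le_right (le_max_right A B)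
    nlinarith [le_max_left 1 (max A B)]

namespace IsSineTypeSolution

variable {a b : ℝ → ℝ} {K : ℝ}

theorem add_mul_norm_le_exp {l : ℂ} {v : ℝ → ℂ}
    (h : IsSineTypeSolution (fun x => l ^ 2 + 2 * l * a x - b x) v)
    (habK : ∀ x ∈ Ioo (0:ℝ) 1, |a x| ≤ K ∧ |b x| ≤ K ^ 2) (hK : 0 ≤ K) :
    (‖l‖ + K) * ‖v 1‖ ≤ Real.exp (‖l‖ + K) :=
  h.mul_norm_le_exp (by positivity) fun x hx =>
    Complex.norm_sq_add_two_mul_sub_le l (habK x hx).1 (habK x hx).2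

theorem exp_div_le_norm {t : ℝ} {v : ℝ → ℂ}
    (h : IsSineTypeSolution (fun x => (t : ℂ) ^ 2 + 2 * t * a x - b x) v)
    (habK : ∀ x ∈ Ioo (0:ℝ) 1, |a x| ≤ K ∧ |b x| ≤ K ^ 2) (hK : 1 ≤ K)
    (ht : 4 * K ≤ t) : Real.exp (t / 2) / (2 * t) ≤ ‖v 1‖ := by
  have hre : IsSineTypeSolution (fun x => ((t ^ 2 + 2 * t * a x - b x : ℝ) : ℂ)) v := by
    convert h using 2; push_cast; ring
  calc Real.exp (t / 2) / (2 * t) = Real.exp (t / 2) / (4 * (t / 2)) := by ring_nf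
    _ ≤ (v 1).re := hre.re.exp_div_le (by linarith) fun x hx =>
      sq_half_le_sq_add_two_mul_sub (habK x hx).1 (habK x hx).2 ht
    _ ≤ ‖v 1‖ := Complex.re_le_norm _

end IsSineTypeSolution

theorem Real.exp_le_exp_one_mul_exp_rpow {r ε : ℝ} (hr : 0 ≤ r) (hε : 0 ≤ ε) :
    Real.exp r ≤ Real.exp 1 * Real.exp (r ^ (1 + ε)) := by
  rw [← Real.exp_add, Real.exp_le_exp]
  rcases le_total r 1 with h | h
  · linarith [Real.rpow_nonneg hr (1 + ε)]
  · linarith [Real.self_le_rpow_of_one_le h (by linarith : (1 : ℝ) ≤ 1 + ε)]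

theorem eventually_mul_exp_rpow_lt_exp_div {ρ : ℝ} (hρ : ρ < 1) (C : ℝ) :
    ∀ᶠ t in atTop, C * Real.exp (t ^ ρ) < Real.exp (t / 2) / (2 * t) := by
  have hρt : ∀ᶠ t : ℝ in atTop, t ^ ρ ≤ t / 4 := by
    filter_upwards [(tendsto_rpow_neg_atTop (by linarith : 0 < 1 - ρ)).eventually
      (eventually_le_nhds (by norm_num : (0 : ℝ) < 1 / 4)), eventually_gt_atTop 0] with t h ht
    rw [neg_sub, Real.rpow_sub ht, Real.rpow_one, div_le_iff₀ ht] at h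
    linarith
  have hexp := (tendsto_exp_mul_div_rpow_atTop 1 (1 / 4) (by norm_num)).eventually_gt_atTop
    (2 * |C|)
  filter_upwards [hρt, hexp, eventually_gt_atTop 0] with t hρt hexp ht
  rw [Real.rpow_one, lt_div_iff₀ ht] at hexp
  rw [lt_div_iff₀ (by positivity), show t / 2 = 1 / 4 * t + 1 / 4 * t by ring, Real.exp_add]
  calc C * Real.exp (t ^ ρ) * (2 * t) ≤ |C| * Real.exp (1 / 4 * t) * (2 * t) := by
        gcongr
        · exact le_abs_self C
        · linarith
    _ < Real.exp (1 / 4 * t) * Real.exp (1 / 4 * t) := by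
        nlinarith [Real.exp_pos (1 / 4 * t)]

/-- for real-valued `a ∈ C²[0,1]`, `b ∈ C¹[0,1]`, let `u(·,λ)` solve
`u'' − (λ² + 2λa − b)u = 0` with `u(0,λ) = 0`, `u'(0,λ) = 1`, and let the entire
function `γ₀` be `γ₀(λ) = u(1,λ)`. Then `|γ₀(λ)| ≤ C|λ|^{−1}e^{|λ|}` for large `|λ|`;
consequently `γ₀` has order one (growth of order `≤ 1 + ε` for every `ε > 0`, but not
of any order `ρ < 1`), and the series `Σ |λ_n|^{−2}` over its nonzero zeros
converges, so the genus of the associated canonical product is one. -/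
theorem gamma0_growth_order_one (a b : ℝ → ℝ)
    (ha : ContDiffOn ℝ 2 a (Set.Icc 0 1))
    (hb : ContDiffOn ℝ 1 b (Set.Icc 0 1))
    (u : ℂ → ℝ → ℂ) (γ : ℂ → ℂ)
    (hu_smooth : ∀ l : ℂ, ContDiffOn ℝ 2 (u l) (Set.Icc 0 1))
    (hu_ode : ∀ l : ℂ, ∀ x ∈ Set.Ioo (0:ℝ) 1,
      deriv (deriv (u l)) x = (l ^ 2 + 2 * l * (a x : ℂ) - (b x : ℂ)) * u l x)
    (hu0 : ∀ l : ℂ, u l 0 = 0)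
    (hu0' : ∀ l : ℂ, derivWithin (u l) (Set.Icc 0 1) 0 = 1)
    (hγ : ∀ l : ℂ, γ l = u l 1)
    (hγ_entire : Differentiable ℂ γ) :
    -- the growth estimate |γ₀(λ)| ≤ C |λ|⁻¹ e^{|λ|} for large |λ|
    (∃ C R : ℝ, 0 < C ∧ 0 < R ∧ ∀ l : ℂ, R ≤ ‖l‖ →
      ‖γ l‖ ≤ C * ‖l‖⁻¹ * Real.exp ‖l‖) ∧
    -- γ₀ has order at most one …
    (∀ ε : ℝ, 0 < ε → ∃ C : ℝ, ∀ l : ℂ, ‖γ l‖ ≤ C * Real.exp (‖l‖ ^ (1 + ε))) ∧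
    -- … and order at least one, i.e. the order is exactly one
    (∀ ρ : ℝ, ρ < 1 → ¬ ∃ C : ℝ, ∀ l : ℂ, ‖γ l‖ ≤ C * Real.exp (‖l‖ ^ ρ)) ∧
    -- Σ |λ_n|^{−2} over the nonzero zeros of γ₀ converges
    (∀ Λ : ℕ → ℂ, Function.Injective Λ → (∀ n : ℕ, γ (Λ n) = 0 ∧ Λ n ≠ 0) →
      Summable (fun n : ℕ => ‖Λ n‖ ^ (-2 : ℤ))) := by
  obtain ⟨K, hK, habK⟩ := isCompact_Icc.exists_abs_le_and_abs_le_sq ha.continuousOn hb.continuousOn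
  have habK' (x : ℝ) (hx : x ∈ Ioo (0:ℝ) 1) := habK x (Ioo_subset_Icc_self hx)
  have hsol (l : ℂ) : IsSineTypeSolution (fun x => l ^ 2 + 2 * l * a x - b x) (u l) :=
    ⟨hu_smooth l, hu_ode l, hu0 l, hu0' l⟩
  have hupper (l : ℂ) : (‖l‖ + K) * ‖γ l‖ ≤ Real.exp (‖l‖ + K) :=
    hγ l ▸ (hsol l).add_mul_norm_le_exp habK' (by linarith)
  have hexp_type (l : ℂ) : ‖γ l‖ ≤ Real.exp K * Real.exp ‖l‖ := by
    rw [mul_comm, ← Real.exp_add]; nlinarith [hupper l, norm_nonneg (γ l), norm_nonneg l]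
  have hlower (t : ℝ) (ht : 4 * K ≤ t) : Real.exp (t / 2) / (2 * t) ≤ ‖γ t‖ :=
    hγ t ▸ (hsol t).exp_div_le_norm habK' hK ht
  refine ⟨⟨Real.exp K, 1, Real.exp_pos K, one_pos, fun l hl => ?_⟩,
    fun ε hε => ⟨Real.exp K * Real.exp 1, fun l => ?_⟩, fun ρ hρ ⟨C, hC⟩ => ?_,
    fun Λ hΛ hzero => ?_⟩
  · calc ‖γ l‖ ≤ Real.exp (‖l‖ + K) / (‖l‖ + K) := by
          rw [le_div_iff₀ (by positivity), mul_comm]; exact hupper l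
      _ ≤ Real.exp (‖l‖ + K) / ‖l‖ := by gcongr; linarith
      _ = Real.exp K * ‖l‖⁻¹ * Real.exp ‖l‖ := by rw [Real.exp_add]; field_simp
  · calc ‖γ l‖ ≤ Real.exp K * Real.exp ‖l‖ := hexp_type l
      _ ≤ Real.exp K * (Real.exp 1 * Real.exp (‖l‖ ^ (1 + ε))) := by
        gcongr; exact Real.exp_le_exp_one_mul_exp_rpow (norm_nonneg l) hε.le
      _ = Real.exp K * Real.exp 1 * Real.exp (‖l‖ ^ (1 + ε)) := by ring
  · obtain ⟨t, ht, hlt⟩ :=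
      ((eventually_ge_atTop (4 * K)).and (eventually_mul_exp_rpow_lt_exp_div hρ C)).exists
    have := hC t
    rw [Complex.norm_real, Real.norm_of_nonneg (by linarith)] at this
    linarith [hlower t ht]
  · have hpos : 0 < Real.exp (4 * K / 2) / (2 * (4 * K)) := by positivity
    exact hγ_entire.summable_norm_zpow_neg_two_of_norm_le_mul_exp hexp_type
      (norm_pos_iff.1 (hpos.trans_le (hlower _ le_rfl))) hΛ fun n => (hzero n).1
end
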